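/- Let α_1,…,α_n be pairwise distinct elements of a finite field F_q, let δ ∈ F_q, and let k, r be integers with 6 ≤ 2k ≤ n and 2 ≤ r ≤ k−1. Then G_2 · H_2ᵀ = 0 and the rows of H_2 are linearly independent over F_q, where b = δ − ∑_{i=1}^n α_i; consequently H_2 is a parity check matrix for the code C_2 generated by G_2, i.e. the rows of H_2 form a basis of the dual code C_2^⊥ ⊆ F_q^{n+2}. -/

import Mathlib

open Finset Matrix

/-- Elementary symmetric polynomial `σ_t` evaluated at the values `x 0, …, x (m-1)`. -/
def esymmV {F : Type*} [CommRing F] {m : ℕ} (t : ℕ) (x : Fin m → F) : F :=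
  ∑ A ∈ Finset.univ.powersetCard t, ∏ i ∈ A, x i

/-- Complete homogeneous symmetric polynomial `S_t` evaluated at `x 0, …, x (m-1)`. -/
def hsymmV {F : Type*} [CommRing F] {m : ℕ} (t : ℕ) (x : Fin m → F) : F :=
  ∑ d ∈ Finset.Nat.antidiagonalTuple m t, ∏ i, x i ^ d i

/-- The exponent of the `i`-th row (0-indexed): the elements of
`{0,…,k−r−1} ∪ {k−r+1,…,k}` in increasing order. -/
def expo (k r : ℕ) (i : Fin k) : ℕ := if (i : ℕ) < k - r then (i : ℕ) else (i : ℕ) + 1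

/-- The Vandermonde product `∏_{i<j} (α_j − α_i)`. -/
def vand {F : Type*} [CommRing F] {n : ℕ} (α : Fin n → F) : F :=
  ∏ i : Fin n, ∏ j ∈ Finset.Ioi i, (α j - α i)

/-- The matrix `G_{r,k}`: rows are `(α_1^e, …, α_n^e)` for
`e ∈ {0,…,k−r−1} ∪ {k−r+1,…,k}` in increasing order. -/
def Grk {F : Type*} [Field F] {n : ℕ} (α : Fin n → F) (k r : ℕ) : Matrix (Fin k) (Fin n) F :=
  Matrix.of fun i j => α j ^ expo k r i

/-- The matrix `G_1`: `G_{r,k}` with the extra column `(0,…,0,1)ᵀ` appended. -/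
def G1 {F : Type*} [Field F] {n : ℕ} (α : Fin n → F) (k r : ℕ) :
    Matrix (Fin k) (Fin (n + 1)) F :=
  Matrix.of fun i j =>
    if hj : (j : ℕ) < n then α ⟨j, hj⟩ ^ expo k r i
    else if (i : ℕ) = k - 1 then 1 else 0

/-- The matrix `G_2`: `G_1` with the extra column `(0,…,0,1,δ)ᵀ` appended
(entry `1` in row `k−1`, i.e. index `k−2`, and `δ` in row `k`, i.e. index `k−1`). -/
def G2 {F : Type*} [Field F] {n : ℕ} (α : Fin n → F) (k r : ℕ) (δ : F) :
    Matrix (Fin k) (Fin (n + 2)) F :=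
  Matrix.of fun i j =>
    if hj : (j : ℕ) < n then α ⟨j, hj⟩ ^ expo k r i
    else if (j : ℕ) = n then (if (i : ℕ) = k - 1 then 1 else 0)
    else (if (i : ℕ) = k - 2 then 1 else if (i : ℕ) = k - 1 then δ else 0)

/-- `u_i = ∏_{j ≠ i} (α_i − α_j)⁻¹`. -/
def uCoef {F : Type*} [Field F] {n : ℕ} (α : Fin n → F) (i : Fin n) : F :=
  ∏ j ∈ Finset.univ.erase i, (α i - α j)⁻¹

/-- `Λ_{r,i} = ∑_{j=0}^{r} (−1)^j σ_j α_i^{(n−k)+(r−1)−j}`. -/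
def Lam {F : Type*} [Field F] {n : ℕ} (α : Fin n → F) (k r : ℕ) (i : Fin n) : F :=
  ∑ j ∈ Finset.range (r + 1), (-1 : F) ^ j * esymmV j α * α i ^ ((n - k) + (r - 1) - j)

/-- Every `k×k` submatrix of `G` is nonsingular. -/
def allSubNonsing {F : Type*} [Field F] {k m : ℕ} (G : Matrix (Fin k) (Fin m) F) : Prop :=
  ∀ c : Fin k → Fin m, Function.Injective c → (G.submatrix id c).det ≠ 0

/-- The linear code spanned by the rows of `G`. -/
def rowSpan {F : Type*} [Field F] {k m : ℕ} (G : Matrix (Fin k) (Fin m) F) :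
    Submodule F (Fin m → F) :=
  Submodule.span F (Set.range fun i => G i)

/-- The dual code `C^⊥ = {x : ∑ x_i c_i = 0 for all c ∈ C}`, as a set. -/
def dualSet {F : Type*} [Field F] {m : ℕ} (C : Set (Fin m → F)) : Set (Fin m → F) :=
  {x | ∀ c ∈ C, ∑ i, x i * c i = 0}

/-- The extended code of `C` with respect to `w`. -/
def extCode {F : Type*} [Field F] {m : ℕ} (C : Set (Fin m → F)) (w : Fin m → F) :
    Set (Fin (m + 1) → F) :=
  {y | ∃ c ∈ C, (∀ i : Fin m, y (Fin.castSucc i) = c i) ∧ y (Fin.last m) = ∑ i, w i * c i}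

/-- The parity check matrix `H_{r,k}`: the first `n−k−1` rows are
`(u_1 α_1^e, …, u_n α_n^e)` for `e = 0,…,n−k−2` and the last row is
`(u_1 Λ_{r,1}, …, u_n Λ_{r,n})`. -/
def Hrk {F : Type*} [Field F] {n : ℕ} (α : Fin n → F) (k r : ℕ) :
    Matrix (Fin (n - k)) (Fin n) F :=
  Matrix.of fun i j =>
    if (i : ℕ) < n - k - 1 then uCoef α j * α j ^ (i : ℕ)
    else uCoef α j * Lam α k r j

/-- The parity check matrix `H_1`. -/
def H1 {F : Type*} [Field F] {n : ℕ} (α : Fin n → F) (k r : ℕ) :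
    Matrix (Fin (n - k + 1)) (Fin (n + 1)) F :=
  Matrix.of fun i j =>
    if hj : (j : ℕ) < n then
      (if (i : ℕ) < n - k - 1 then uCoef α ⟨j, hj⟩ * α ⟨j, hj⟩ ^ (i : ℕ)
       else if (i : ℕ) = n - k - 1 then uCoef α ⟨j, hj⟩ * Lam α k r ⟨j, hj⟩
       else uCoef α ⟨j, hj⟩ * α ⟨j, hj⟩ ^ (n - k - 1))
    else (if (i : ℕ) = n - k then -1 else 0)

/-- The parity check matrix `H_2` (case `2 ≤ r`), with parameter `b`. -/
def H2 {F : Type*} [Field F] {n : ℕ} (α : Fin n → F) (k r : ℕ) (b : F) :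
    Matrix (Fin (n - k + 2)) (Fin (n + 2)) F :=
  Matrix.of fun i j =>
    if hj : (j : ℕ) < n then
      (if (i : ℕ) < n - k - 1 then uCoef α ⟨j, hj⟩ * α ⟨j, hj⟩ ^ (i : ℕ)
       else if (i : ℕ) = n - k - 1 then uCoef α ⟨j, hj⟩ * Lam α k r ⟨j, hj⟩
       else if (i : ℕ) = n - k then uCoef α ⟨j, hj⟩ * α ⟨j, hj⟩ ^ (n - k - 1)
       else uCoef α ⟨j, hj⟩ * α ⟨j, hj⟩ ^ (n - k))
    else if (j : ℕ) = n then
      (if (i : ℕ) = n - k then -1 else if (i : ℕ) = n - k + 1 then b else 0)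
    else (if (i : ℕ) = n - k + 1 then -1 else 0)

/-!
Write `L f = ∑ j, u_j f(α_j)`. By Lagrange interpolation `L f` is the coefficient of `X^(n-1)` in
`f` whenever `deg f < n`, and Vieta's formula `∏ (X - α_i) = ∑ (-1)^t σ_t X^(n-t)` gives
`L X^n = σ_1` and kills `L (X^m Λ)` for every exponent `m ≠ k - r` of `G_{r,k}`. Hence every row
of `G_2` is orthogonal to every row of `H_2`, the entry `b = δ - σ_1` compensating `L X^n`. On the
first `n` coordinates the rows of `G_2` and `H_2` are weighted evaluations of polynomials of
pairwise distinct degrees `< n`, so both matrices have independent rows, and the dimension count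
`k + (n - k + 2) = n + 2` identifies the row space of `H_2` with the dual of `C_2`.
-/

open Polynomial

namespace Polynomial

variable {F : Type*} [Field F]

theorem linearIndependent_of_injective_natDegree {ι : Type*} {Q : ι → F[X]}
    (hQ : ∀ i, Q i ≠ 0) (hdeg : Function.Injective (natDegree ∘ Q)) :
    LinearIndependent F Q := by
  classical
  refine linearIndependent_iff'.2 fun s g hsum i hi => by_contra fun hgi => ?_
  have hpair : {j | j ∈ s ∧ g j • Q j ≠ 0}.Pairwise
      (Function.onFun Ne (degree ∘ fun j => g j • Q j)) := by
    rintro a ⟨-, ha⟩ b ⟨-, hb⟩ hab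
    simp only [Function.onFun, Function.comp_apply, smul_eq_C_mul,
      degree_C_mul (left_ne_zero_of_smul ha), degree_C_mul (left_ne_zero_of_smul hb),
      degree_eq_natDegree (hQ a), degree_eq_natDegree (hQ b), ne_eq, Nat.cast_inj]
    exact fun h => hab (hdeg h)
  have hsup := degree_sum_eq_of_disjoint _ s hpair
  rw [hsum, degree_zero, eq_comm, Finset.sup_eq_bot_iff] at hsup
  exact smul_ne_zero hgi (hQ i) (degree_eq_bot.1 (hsup i hi))

theorem linearIndependent_mul_eval {n : ℕ} {ι : Type*} {α : Fin n → F}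
    (hα : Function.Injective α) {w : Fin n → F} (hw : ∀ j, w j ≠ 0) {Q : ι → F[X]}
    (hQ : LinearIndependent F Q) (hdeg : ∀ i, (Q i).degree < n) :
    LinearIndependent F fun i j => w j * (Q i).eval (α j) := by
  let ev : F[X] →ₗ[F] Fin n → F := LinearMap.pi fun j => w j • leval (α j)
  refine hQ.map (f := ev) (Submodule.disjoint_def.2 fun p hp hker => ?_)
  have hpdeg : p.degree < n := mem_degreeLT.1 <|
    Submodule.span_le.2 (Set.range_subset_iff.2 fun i => mem_degreeLT.2 (hdeg i)) hp
  refine eq_zero_of_degree_lt_of_eval_index_eq_zero (s := Finset.univ) hα.injOn (by simpa)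
    fun j _ => ?_
  simpa [ev, hw j] using congrFun (LinearMap.mem_ker.1 hker) j

end Polynomial

section Duality

variable {F : Type*} [Field F] {m : ℕ}

theorem mem_dualSet_span_iff {S : Set (Fin m → F)} {x : Fin m → F} :
    x ∈ dualSet (Submodule.span F S : Set (Fin m → F)) ↔ ∀ c ∈ S, x ⬝ᵥ c = 0 :=
  ⟨fun h c hc => h c (Submodule.subset_span hc), fun h _ hc =>
    Submodule.span_le (p := LinearMap.ker (dotProductEquiv F (Fin m) x)).2 h hc⟩

theorem dualSet_rowSpan {k : ℕ} (G : Matrix (Fin k) (Fin m) F) :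
    dualSet (rowSpan G : Set (Fin m → F)) = LinearMap.ker G.mulVecLin := by
  ext x
  simp only [rowSpan, mem_dualSet_span_iff, Set.forall_mem_range, SetLike.mem_coe,
    LinearMap.mem_ker, Matrix.mulVecLin_apply, funext_iff, Matrix.mulVec, dotProduct_comm x,
    Pi.zero_apply]

theorem coe_rowSpan_eq_dualSet_rowSpan {k l : ℕ} {G : Matrix (Fin k) (Fin m) F}
    {H : Matrix (Fin l) (Fin m) F} (hGH : G * Hᵀ = 0) (hG : LinearIndependent F fun i => G i)
    (hH : LinearIndependent F fun i => H i) (hm : k + l = m) :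
    (rowSpan H : Set (Fin m → F)) = dualSet (rowSpan G : Set (Fin m → F)) := by
  rw [dualSet_rowSpan]
  congr 1
  refine Submodule.eq_of_le_of_finrank_le ?_ ?_
  · refine Submodule.span_le.2 (Set.range_subset_iff.2 fun i => ?_)
    ext t
    simpa [Matrix.mul_apply, Matrix.mulVec, dotProduct] using congrFun (congrFun hGH t) i
  · have hker := LinearMap.finrank_range_add_finrank_ker G.mulVecLin
    rw [← Matrix.rank, LinearIndependent.rank_matrix (M := G) hG, Fintype.card_fin,
      Module.finrank_fin_fun] at hker
    rw [rowSpan, finrank_span_eq_card hH, Fintype.card_fin]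
    omega

end Duality

section PowerSums

open Finset

variable {F : Type*} [Field F] {n : ℕ} {α : Fin n → F}

theorem sum_uCoef_mul_eval (hα : Function.Injective α) {f : F[X]} (hf : f.degree < n) :
    ∑ j, uCoef α j * f.eval (α j) = f.coeff (n - 1) := by
  have h := Lagrange.coeff_eq_sum (s := univ) hα.injOn (P := f) (by simpa using hf)
  rw [card_univ, Fintype.card_fin] at h
  rw [h]
  refine sum_congr rfl fun j _ => ?_
  rw [uCoef, prod_inv_distrib, div_eq_mul_inv, mul_comm]

theorem sum_uCoef_mul_pow_of_lt (hα : Function.Injective α) {e : ℕ} (he : e + 1 < n) :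
    ∑ j, uCoef α j * α j ^ e = 0 := by
  have h := sum_uCoef_mul_eval hα (f := X ^ e) (by rw [degree_X_pow]; exact_mod_cast (by omega))
  simpa [coeff_X_pow, show n - 1 ≠ e by omega] using h

theorem sum_uCoef_mul_pow_sub_one (hα : Function.Injective α) (hn : 0 < n) :
    ∑ j, uCoef α j * α j ^ (n - 1) = 1 := by
  have h := sum_uCoef_mul_eval hα (f := X ^ (n - 1))
    (by rw [degree_X_pow]; exact_mod_cast (by omega))
  simpa using h

theorem sum_esymmV_mul_pow_eq_zero (j : Fin n) :
    ∑ t ∈ range (n + 1), (-1) ^ t * esymmV t α * α j ^ (n - t) = 0 := by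
  have h := congrArg (eval (α j)) (Multiset.prod_X_sub_X_eq_sum_esymm (univ.val.map α))
  simp only [eval_multiset_prod, Multiset.map_map, Function.comp_def, eval_sub, eval_X, eval_C,
    eval_finsetSum, eval_mul, eval_pow, eval_neg, eval_one, Multiset.card_map, card_val,
    card_univ, Fintype.card_fin, esymm_map_val] at h
  rw [← prod_eq_multiset_prod, prod_eq_zero (mem_univ j) (sub_self _)] at h
  simpa [esymmV, mul_assoc] using h.symm

theorem sum_esymmV_mul_sum_mul_pow_eq_zero (w : Fin n → F) (m : ℕ) :
    ∑ t ∈ range (n + 1), (-1) ^ t * esymmV t α * ∑ j, w j * α j ^ (m + (n - t)) = 0 :=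
  calc _ = ∑ j, w j * α j ^ m * ∑ t ∈ range (n + 1), (-1) ^ t * esymmV t α * α j ^ (n - t) := by
        simp only [mul_sum, pow_add]
        rw [sum_comm]
        exact sum_congr rfl fun j _ => sum_congr rfl fun t _ => by ring
    _ = 0 := sum_eq_zero fun j _ => by rw [sum_esymmV_mul_pow_eq_zero, mul_zero]

theorem sum_uCoef_mul_pow_self (hα : Function.Injective α) :
    ∑ j, uCoef α j * α j ^ n = ∑ j, α j := by
  obtain _ | m := n
  · simp
  have h := sum_esymmV_mul_sum_mul_pow_eq_zero (α := α) (uCoef α) 0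
  rw [sum_range_succ', sum_range_succ', sum_eq_zero fun t ht =>
    by rw [sum_uCoef_mul_pow_of_lt hα (by simp only [mem_range] at ht; omega), mul_zero]] at h
  simp only [zero_add, Nat.sub_zero, pow_zero, pow_one, sum_uCoef_mul_pow_sub_one hα m.succ_pos]
    at h
  simp only [esymmV, powersetCard_one, sum_map, Function.Embedding.coeFn_mk, prod_singleton,
    powersetCard_zero, sum_singleton, prod_empty, neg_mul, one_mul, mul_one] at h
  linear_combination h

variable {k r : ℕ}

theorem sum_uCoef_mul_pow_mul_Lam (hα : Function.Injective α) (hr : 1 ≤ r) (hrk : r ≤ k)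
    (hkn : k < n) {m : ℕ} (hm : m ≤ k) (hmr : m ≠ k - r) :
    ∑ j, uCoef α j * (α j ^ m * Lam α k r j) = 0 := by
  have hexpand : ∑ j, uCoef α j * (α j ^ m * Lam α k r j) = ∑ t ∈ range (r + 1),
      (-1) ^ t * esymmV t α * ∑ j, uCoef α j * α j ^ (m + ((n - k) + (r - 1) - t)) := by
    simp only [Lam, mul_sum]
    rw [sum_comm]
    exact sum_congr rfl fun t _ => sum_congr rfl fun j _ => by ring
  rw [hexpand]
  rcases lt_or_gt_of_ne hmr with hlt | hgt
  · exact sum_eq_zero fun t _ => by rw [sum_uCoef_mul_pow_of_lt hα (by omega), mul_zero]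
  -- For `m = k - r + 1 + p` the sum is the part `t ≤ r` of the Vieta relation for `p`;
  -- the terms `t > r` of that relation vanish.
  obtain ⟨p, rfl⟩ : ∃ p, m = k - r + 1 + p := ⟨m - (k - r + 1), by omega⟩
  rw [← sum_esymmV_mul_sum_mul_pow_eq_zero (uCoef α) p]
  refine sum_subset_zero_on_sdiff (range_subset_range.2 (by omega)) (fun t ht => ?_)
    fun t ht => ?_
  · simp only [mem_sdiff, mem_range] at ht
    rw [sum_uCoef_mul_pow_of_lt hα (by omega), mul_zero]
  · simp only [mem_range] at ht
    rw [show k - r + 1 + p + (n - k + (r - 1) - t) = p + (n - t) by omega]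

end PowerSums

section Expo

variable {k r : ℕ}

theorem expo_le_add_one (i : Fin k) : expo k r i ≤ i + 1 := by
  unfold expo; split <;> omega

theorem expo_of_le {i : Fin k} (h : k - r ≤ i) : expo k r i = i + 1 := by
  simp [expo, not_lt.2 h]

theorem expo_ne_sub (i : Fin k) : expo k r i ≠ k - r := by
  unfold expo; split <;> omega

theorem expo_injective : Function.Injective (expo k r) := by
  intro i i' h
  unfold expo at h
  split at h <;> split at h <;> omega

end Expo

section RowPolynomials

open Finset

variable {F : Type*} [Field F] {n : ℕ} {α : Fin n → F} {k r : ℕ}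

noncomputable def lamPoly (α : Fin n → F) (k r : ℕ) : F[X] :=
  ∑ t ∈ range (r + 1), C ((-1) ^ t * esymmV t α) * X ^ ((n - k) + (r - 1) - t)

theorem eval_lamPoly (j : Fin n) : (lamPoly α k r).eval (α j) = Lam α k r j := by
  simp [lamPoly, Lam, eval_finsetSum]

theorem natDegree_lamPoly_le : (lamPoly α k r).natDegree ≤ n - k + (r - 1) :=
  natDegree_sum_le_of_forall_le _ _ fun _ _ => (natDegree_C_mul_X_pow_le _ _).trans (Nat.sub_le _ _)

theorem coeff_lamPoly_self (hkn : k < n) : (lamPoly α k r).coeff (n - k + (r - 1)) = 1 := by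
  rw [lamPoly, finsetSum_coeff, sum_eq_single 0 (fun t _ ht => ?_) (by simp)]
  · simp [esymmV]
  · rw [coeff_C_mul_X_pow, if_neg (by omega)]

theorem natDegree_lamPoly (hkn : k < n) : (lamPoly α k r).natDegree = n - k + (r - 1) :=
  natDegree_eq_of_le_of_coeff_ne_zero natDegree_lamPoly_le (by simp [coeff_lamPoly_self hkn])

theorem lamPoly_ne_zero (hkn : k < n) : lamPoly α k r ≠ 0 := fun h => by
  simpa [h] using coeff_lamPoly_self (α := α) (r := r) hkn

noncomputable def H2Poly (α : Fin n → F) (k r : ℕ) (s : Fin (n - k + 2)) : F[X] :=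
  if (s : ℕ) < n - k - 1 then X ^ (s : ℕ)
  else if (s : ℕ) = n - k - 1 then lamPoly α k r
  else if (s : ℕ) = n - k then X ^ (n - k - 1)
  else X ^ (n - k)

theorem H2_apply_castSucc_castSucc (b : F) (s : Fin (n - k + 2)) (j : Fin n) :
    H2 α k r b s (Fin.castSucc (Fin.castSucc j)) = uCoef α j * (H2Poly α k r s).eval (α j) := by
  simp only [H2, H2Poly, Matrix.of_apply, Fin.val_castSucc, j.is_lt, dite_true, Fin.eta]
  split_ifs <;> simp [eval_lamPoly]

theorem H2Poly_ne_zero (hkn : k < n) (s : Fin (n - k + 2)) : H2Poly α k r s ≠ 0 := by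
  unfold H2Poly
  split_ifs <;> simp [lamPoly_ne_zero hkn]

theorem injective_natDegree_H2Poly (hr : 2 ≤ r) (hkn : k < n) :
    Function.Injective (natDegree ∘ H2Poly α k r) := by
  intro s s' h
  simp only [Function.comp_apply, H2Poly] at h
  ext
  split_ifs at h <;> simp only [natDegree_X_pow, natDegree_lamPoly hkn] at h <;> omega

theorem degree_H2Poly_lt (hr : 1 ≤ r) (hrk : r ≤ k) (hkn : k < n) (s : Fin (n - k + 2)) :
    (H2Poly α k r s).degree < n := by
  refine degree_le_natDegree.trans_lt (Nat.cast_lt.2 ?_)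
  unfold H2Poly
  split_ifs <;> simp only [natDegree_X_pow, natDegree_lamPoly hkn] <;> omega

theorem sum_uCoef_mul_pow_mul_eval_H2Poly_of_lt (hα : Function.Injective α) (hr : 1 ≤ r)
    (hrk : r ≤ k) (hkn : k < n) {s : Fin (n - k + 2)} (hs : (s : ℕ) < n - k) {e : ℕ}
    (he : e ≤ k) (her : e ≠ k - r) :
    ∑ j, uCoef α j * (α j ^ e * (H2Poly α k r s).eval (α j)) = 0 := by
  by_cases hs' : (s : ℕ) < n - k - 1
  · simp only [H2Poly, if_pos hs', eval_X_pow, ← pow_add]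
    exact sum_uCoef_mul_pow_of_lt hα (by omega)
  · simp only [H2Poly, if_neg hs', if_pos (show (s : ℕ) = n - k - 1 by omega), eval_lamPoly]
    exact sum_uCoef_mul_pow_mul_Lam hα hr hrk hkn he her

end RowPolynomials

section ParityCheck

open Finset

variable {F : Type*} [Field F] {n : ℕ} {α : Fin n → F} {k r : ℕ}

theorem uCoef_ne_zero (hα : Function.Injective α) (j : Fin n) : uCoef α j ≠ 0 :=
  Lagrange.nodalWeight_ne_zero hα.injOn (mem_univ j)

theorem linearIndependent_G2 (hα : Function.Injective α) (hkn : k < n) (δ : F) :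
    LinearIndependent F fun t => G2 α k r δ t := by
  refine LinearIndependent.of_comp (LinearMap.funLeft F F (Fin.castSucc ∘ Fin.castSucc)) ?_
  have hdeg (t : Fin k) : (X ^ expo k r t : F[X]).degree < n := by
    rw [degree_X_pow]
    exact_mod_cast (expo_le_add_one t).trans_lt (by omega)
  convert linearIndependent_mul_eval hα (w := 1) (fun _ => one_ne_zero)
    (linearIndependent_of_injective_natDegree (Q := fun t => X ^ expo k r t)
      (fun t => pow_ne_zero _ X_ne_zero)
      (by simpa [Function.comp_def] using expo_injective)) hdeg using 1
  ext t j
  simp [G2]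

theorem linearIndependent_H2 (hα : Function.Injective α) (hr : 2 ≤ r) (hrk : r ≤ k)
    (hkn : k < n) (b : F) : LinearIndependent F fun s => H2 α k r b s := by
  refine LinearIndependent.of_comp (LinearMap.funLeft F F (Fin.castSucc ∘ Fin.castSucc)) ?_
  convert linearIndependent_mul_eval hα (uCoef_ne_zero hα)
    (linearIndependent_of_injective_natDegree (Q := H2Poly α k r) (H2Poly_ne_zero hkn)
      (injective_natDegree_H2Poly hr hkn)) (degree_H2Poly_lt (by omega) hrk hkn) using 1
  ext s j
  simp [H2_apply_castSucc_castSucc]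

theorem G2_mul_H2_transpose_apply (δ b : F) (t : Fin k) (s : Fin (n - k + 2)) :
    (G2 α k r δ * (H2 α k r b)ᵀ) t s =
      ∑ j, uCoef α j * (α j ^ expo k r t * (H2Poly α k r s).eval (α j)) +
        (if (t : ℕ) = k - 1 then 1 else 0) *
          (if (s : ℕ) = n - k then -1 else if (s : ℕ) = n - k + 1 then b else 0) +
        (if (t : ℕ) = k - 2 then 1 else if (t : ℕ) = k - 1 then δ else 0) *
          (if (s : ℕ) = n - k + 1 then -1 else 0) := by
  rw [Matrix.mul_apply, Fin.sum_univ_castSucc, Fin.sum_univ_castSucc]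
  simp only [Matrix.transpose_apply, H2_apply_castSucc_castSucc]
  congr 1
  · congr 1
    · refine sum_congr rfl fun j _ => ?_
      simp only [G2, Matrix.of_apply, Fin.val_castSucc, j.is_lt, dite_true, Fin.eta]
      ring
    · simp [G2, H2]
  · simp [G2, H2]

theorem G2_mul_H2_transpose (hα : Function.Injective α) (hr : 2 ≤ r) (hrk : r < k)
    (hkn : k < n) (δ : F) : G2 α k r δ * (H2 α k r (δ - ∑ i, α i))ᵀ = 0 := by
  ext t s
  rw [G2_mul_H2_transpose_apply, Matrix.zero_apply]
  have ht := t.is_lt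
  have hexpo := expo_le_add_one (r := r) t
  obtain hs | hs | hs : (s : ℕ) < n - k ∨ (s : ℕ) = n - k ∨ (s : ℕ) = n - k + 1 := by omega
  · rw [sum_uCoef_mul_pow_mul_eval_H2Poly_of_lt hα (by omega) hrk.le hkn hs (by omega)
      (expo_ne_sub t)]
    simp only [if_neg (by omega : (s : ℕ) ≠ n - k), if_neg (by omega : (s : ℕ) ≠ n - k + 1),
      mul_zero, add_zero]
  · simp only [H2Poly, if_neg (by omega : ¬ (s : ℕ) < n - k - 1),
      if_neg (by omega : (s : ℕ) ≠ n - k - 1), if_pos hs, eval_X_pow, ← pow_add,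
      if_neg (by omega : (s : ℕ) ≠ n - k + 1), mul_zero, add_zero]
    by_cases ht1 : (t : ℕ) = k - 1
    · rw [expo_of_le (by omega), ht1, show k - 1 + 1 + (n - k - 1) = n - 1 by omega,
        sum_uCoef_mul_pow_sub_one hα (by omega), if_pos rfl]
      ring
    · rw [sum_uCoef_mul_pow_of_lt hα (by omega), if_neg ht1]
      ring
  · simp only [H2Poly, if_neg (by omega : ¬ (s : ℕ) < n - k - 1),
      if_neg (by omega : (s : ℕ) ≠ n - k - 1), if_neg (by omega : (s : ℕ) ≠ n - k), if_pos hs,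
      eval_X_pow, ← pow_add]
    obtain ht1 | ht2 | ht3 : (t : ℕ) = k - 1 ∨ (t : ℕ) = k - 2 ∨ (t : ℕ) < k - 2 := by omega
    · rw [expo_of_le (by omega), ht1, show k - 1 + 1 + (n - k) = n by omega,
        sum_uCoef_mul_pow_self hα, if_pos rfl, if_neg (by omega), if_pos rfl]
      ring
    · rw [expo_of_le (by omega), ht2, show k - 2 + 1 + (n - k) = n - 1 by omega,
        sum_uCoef_mul_pow_sub_one hα (by omega), if_neg (by omega), if_pos rfl]
      ring
    · rw [sum_uCoef_mul_pow_of_lt hα (by omega), if_neg (by omega), if_neg (by omega),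
        if_neg (by omega)]
      ring

end ParityCheck

theorem H2_parity_check_general {F : Type*} [Field F] {n : ℕ}
    (α : Fin n → F) (hα : Function.Injective α) (δ : F) (k r : ℕ)
    (hkn : 2 * k ≤ n) (hr2 : 2 ≤ r) (hrk : r ≤ k - 1) :
    G2 α k r δ * (H2 α k r (δ - ∑ i, α i))ᵀ = 0 ∧
    LinearIndependent F (fun i => H2 α k r (δ - ∑ i, α i) i) ∧
    (rowSpan (H2 α k r (δ - ∑ i, α i)) : Set (Fin (n + 2) → F))
      = dualSet (rowSpan (G2 α k r δ) : Set (Fin (n + 2) → F)) := by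
  have hrk' : r < k := by omega
  have hkn' : k < n := by omega
  have hGH := G2_mul_H2_transpose hα hr2 hrk' hkn' δ
  have hH := linearIndependent_H2 hα hr2 hrk'.le hkn' (δ - ∑ i, α i)
  exact ⟨hGH, hH,
    coe_rowSpan_eq_dualSet_rowSpan hGH (linearIndependent_G2 hα hkn' δ) hH (by omega)⟩

/-- Theorem 5.1: for `2 ≤ r ≤ k−1`, `H_2` (with `b = δ − ∑ α_i`) is a parity check
matrix for the code `C_2` generated by `G_2`. -/
theorem H2_parity_check {F : Type*} [Field F] [Fintype F] {n : ℕ}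
    (α : Fin n → F) (hα : Function.Injective α) (δ : F) (k r : ℕ)
    (h6 : 6 ≤ 2 * k) (hkn : 2 * k ≤ n) (hr2 : 2 ≤ r) (hrk : r ≤ k - 1) :
    G2 α k r δ * (H2 α k r (δ - ∑ i, α i))ᵀ = 0 ∧
    LinearIndependent F (fun i => H2 α k r (δ - ∑ i, α i) i) ∧
    (rowSpan (H2 α k r (δ - ∑ i, α i)) : Set (Fin (n + 2) → F))
      = dualSet (rowSpan (G2 α k r δ) : Set (Fin (n + 2) → F)) :=
  H2_parity_check_general α hα δ k r hkn hr2 hrk
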